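/- arXiv:2604.17310 — 5 statements merged into one kernel-verified Lean document; each statement's English description precedes it below -/
import Mathlib

section
/- Marginal consistency (Theorem 3.1): for every λ ∈ [0,1] and every j ∈ Fin K, ∑_{i ∈ Fin K} P_λ(j | i) · m_{γ_t}(i) = m_{γ_s}(j); that is, pushing the marginal at time t through the reverse kernel yields exactly the marginal at time s. -/
/-- Marginal consistency: pushing the marginal at time t through the reverse
kernel yields exactly the marginal at time s. -/
theorem marginal_consistency
    (K : ℕ) (hK : 1 ≤ K) (q1 : Fin K → ℝ)
    (hq1nn : ∀ j, 0 ≤ q1 j) (hq1sum : ∑ j, q1 j = 1)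
    (x : Fin K)
    (γs γt : ℝ) (hγs0 : 0 ≤ γs) (hγs1 : γs ≤ 1)
    (hγt0 : 0 ≤ γt) (hγt1 : γt ≤ 1) (hts : γt ≤ γs) (hγtlt : γt < 1)
    (γst : ℝ) (hγst : γst = (1 - γs) / (1 - γt))
    (m : ℝ → Fin K → ℝ)
    (hm : ∀ (γ : ℝ) (j : Fin K), m γ j = (1 - γ) * q1 j + γ * (if j = x then (1:ℝ) else 0))
    (lam : ℝ) (hlam0 : 0 ≤ lam) (hlam1 : lam ≤ 1)
    (wstay wprior wflip : ℝ)
    (hws : wstay = (1 - lam) * γst)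
    (hwp : wprior = lam * (1 - γs))
    (hwf : wflip = (1 - lam) * (1 - γst) + lam * γs)
    (P : Fin K → Fin K → ℝ)
    (hP : ∀ j i, P j i = wstay * (if j = i then (1:ℝ) else 0) + wprior * q1 j
      + wflip * (if j = x then (1:ℝ) else 0)) :
    ∀ j : Fin K, ∑ i, P j i * m γt i = m γs j := by
  intro j
  have hne : (1 - γt) ≠ 0 := by linarith
  have hst1 : γst * (1 - γt) = 1 - γs := by rw [hγst]; field_simp
  have hmsum : ∑ i, m γt i = 1 := by
    simp only [hm, Finset.sum_add_distrib, ← Finset.mul_sum, hq1sum,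
      Finset.sum_ite_eq', Finset.mem_univ, if_true]
    ring
  have key : ∑ i, P j i * m γt i
      = wstay * m γt j + (wprior * q1 j + wflip * (if j = x then 1 else 0)) := by
    have expand : ∀ i, P j i * m γt i
        = (if j = i then wstay * m γt i else 0)
          + (wprior * q1 j + wflip * (if j = x then 1 else 0)) * m γt i := by
      intro i; rw [hP]; by_cases h : j = i <;> simp [h] <;> ring
    rw [Finset.sum_congr rfl fun i _ => expand i, Finset.sum_add_distrib,
      Finset.sum_ite_eq, if_pos (Finset.mem_univ j), ← Finset.mul_sum, hmsum, mul_one]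
  rw [key, hm, hm, hws, hwp, hwf]
  by_cases h : j = x
  · simp only [h, if_true]
    linear_combination (1 - lam) * (q1 x - 1) * hst1
  · simp only [h, if_false]
    linear_combination (1 - lam) * q1 j * hst1
end

section
/- The Bayes forward transition is a valid probability distribution: for every i ∈ Fin K with m_{γ_s}(i) > 0, the function F_i(j) = (w_stay·1[i=j] + D_i)·m_{γ_t}(j) / m_{γ_s}(i) satisfies F_i(j) ≥ 0 for all j and ∑_{j ∈ Fin K} F_i(j) = 1. -/
/-- The Bayes forward transition is a valid probability distribution. -/
theorem forward_transition_prob_vector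
    (K : ℕ) (hK : 1 ≤ K) (q1 : Fin K → ℝ)
    (hq1nn : ∀ j, 0 ≤ q1 j) (hq1sum : ∑ j, q1 j = 1)
    (x : Fin K)
    (γs γt : ℝ) (hγs0 : 0 ≤ γs) (hγs1 : γs ≤ 1)
    (hγt0 : 0 ≤ γt) (hγt1 : γt ≤ 1) (hts : γt ≤ γs) (hγtlt : γt < 1)
    (γst : ℝ) (hγst : γst = (1 - γs) / (1 - γt))
    (m : ℝ → Fin K → ℝ)
    (hm : ∀ (γ : ℝ) (j : Fin K), m γ j = (1 - γ) * q1 j + γ * (if j = x then (1:ℝ) else 0))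
    (lam : ℝ) (hlam0 : 0 ≤ lam) (hlam1 : lam ≤ 1)
    (wstay wprior wflip : ℝ)
    (hws : wstay = (1 - lam) * γst)
    (hwp : wprior = lam * (1 - γs))
    (hwf : wflip = (1 - lam) * (1 - γst) + lam * γs)
    (D : Fin K → ℝ)
    (hD : ∀ i, D i = wprior * q1 i + wflip * (if i = x then (1:ℝ) else 0))
    (F : Fin K → Fin K → ℝ)
    (hF : ∀ i j, F i j = (wstay * (if i = j then (1:ℝ) else 0) + D i) * m γt j / m γs i) :
    ∀ i : Fin K, 0 < m γs i →
      (∀ j : Fin K, 0 ≤ F i j) ∧ ∑ j, F i j = 1 := by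
  have hγtne : (1 - γt) > 0 := by linarith
  have hγst0 : 0 ≤ γst := by
    rw [hγst]; apply div_nonneg <;> linarith
  have hγst1 : γst ≤ 1 := by
    rw [hγst, div_le_one hγtne]; linarith
  have hws0 : 0 ≤ wstay := by rw [hws]; nlinarith
  have hwp0 : 0 ≤ wprior := by rw [hwp]; nlinarith
  have hwf0 : 0 ≤ wflip := by rw [hwf]; nlinarith
  have hmt0 : ∀ j, 0 ≤ m γt j := by
    intro j; rw [hm]
    by_cases h : j = x <;> simp [h] <;> nlinarith [hq1nn j, hq1nn x]
  have hD0 : ∀ i, 0 ≤ D i := by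
    intro i; rw [hD]
    by_cases h : i = x <;> simp [h] <;> nlinarith [hq1nn i, hq1nn x]
  intro i hi
  have key : wstay * m γt i + D i = m γs i := by
    rw [hws, hD, hm, hm, hwp, hwf, hγst]
    by_cases h : i = x <;> simp [h] <;> field_simp <;> ring
  refine ⟨?_, ?_⟩
  · intro j
    rw [hF]
    apply div_nonneg _ hi.le
    apply mul_nonneg _ (hmt0 j)
    by_cases h : i = j
    · subst h; simp; linarith [hD0 i]
    · simp [h]; exact hD0 i
  · have hsum : ∑ j, m γt j = 1 := by
      simp only [hm]
      rw [Finset.sum_add_distrib, ← Finset.mul_sum, hq1sum, ← Finset.mul_sum]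
      simp
    rw [Finset.sum_congr rfl (fun j _ => hF i j), ← Finset.sum_div]
    have inner : ∑ j, (wstay * (if i = j then (1:ℝ) else 0) + D i) * m γt j
        = wstay * m γt i + D i := by
      have expand : ∀ j : Fin K, (wstay * (if i = j then (1:ℝ) else 0) + D i) * m γt j
          = wstay * (if i = j then m γt j else 0) + D i * m γt j := by
        intro j; by_cases h : i = j <;> simp [h] <;> ring
      rw [Finset.sum_congr rfl (fun j _ => expand j), Finset.sum_add_distrib,
        ← Finset.mul_sum, ← Finset.mul_sum, Finset.sum_ite_eq, hsum]
      simp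
    rw [inner, key, div_self hi.ne']
end

section
/- Mixture form of the forward transition: for every i ∈ Fin K with w_stay·m_{γ_t}(i) + D_i > 0, setting α_i = D_i / (w_stay·m_{γ_t}(i) + D_i), one has α_i ∈ [0,1] and F_i(j) = α_i·m_{γ_t}(j) + (1-α_i)·1[j=i] for all j ∈ Fin K; that is, the induced forward kernel either resamples from the marginal m_{γ_t} with probability α_i or retains the previous state i. -/
/-!
The key identity is `m_{γ_s} = γ_{s|t} m_{γ_t} + (1 - γ_{s|t}) e_x`: noising from level `γ_t` to
`γ_s` keeps a fraction `γ_{s|t}` of the mass and moves the rest to `x`. Averaging it with the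
definition of `m_{γ_s}` in proportions `1 - λ` and `λ` gives `m_{γ_s}(i) = w_stay m_{γ_t}(i) + D_i`,
so `F_i(j) = (w_stay 1[i=j] + D_i) m_{γ_t}(j) / (w_stay m_{γ_t}(i) + D_i)`. Splitting the numerator,
the `D_i` part is `α_i m_{γ_t}(j)`, and the `w_stay` part lives only on `j = i`, where it equals
`1 - α_i`. All weights are nonnegative since `γ_{s|t} ∈ [0, 1]`, whence `α_i ∈ [0, 1]`.
-/

open Set

theorem stay_or_resample_eq_mixture {ι : Type*} [DecidableEq ι] (μ : ι → ℝ) (w d : ℝ) {i : ι}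
    (h : w * μ i + d ≠ 0) (j : ι) :
    (w * (if i = j then (1:ℝ) else 0) + d) * μ j / (w * μ i + d) =
      d / (w * μ i + d) * μ j + (1 - d / (w * μ i + d)) * (if j = i then (1:ℝ) else 0) := by
  by_cases hji : j = i
  · subst hji
    field_simp
    ring
  · rw [if_neg hji, if_neg (Ne.symm hji)]
    ring

section Marginal

variable {ι : Type*} [DecidableEq ι] (q : ι → ℝ) (x : ι)

def marginal (γ : ℝ) (j : ι) : ℝ :=
  (1 - γ) * q j + γ * (if j = x then (1:ℝ) else 0)

theorem marginal_apply (γ : ℝ) (j : ι) :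
    marginal q x γ j = (1 - γ) * q j + γ * (if j = x then (1:ℝ) else 0) :=
  rfl

variable {q} {γs γt : ℝ}

theorem marginal_nonneg (hq : ∀ j, 0 ≤ q j) {γ : ℝ} (hγ0 : 0 ≤ γ) (hγ1 : γ ≤ 1) (j : ι) :
    0 ≤ marginal q x γ j := by
  have hindicator : (0:ℝ) ≤ if j = x then 1 else 0 := by positivity
  exact add_nonneg (mul_nonneg (sub_nonneg.mpr hγ1) (hq j)) (mul_nonneg hγ0 hindicator)

theorem one_sub_div_one_sub_mem_Icc (hts : γt ≤ γs) (hs : γs ≤ 1) (ht : γt < 1) :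
    (1 - γs) / (1 - γt) ∈ Icc 0 1 :=
  ⟨div_nonneg (sub_nonneg.mpr hs) (sub_nonneg.mpr ht.le),
    (div_le_one (sub_pos.mpr ht)).mpr (by linarith)⟩

theorem marginal_eq_conditional_mix (ht : γt ≠ 1) (j : ι) :
    marginal q x γs j = (1 - γs) / (1 - γt) * marginal q x γt j
      + (1 - (1 - γs) / (1 - γt)) * (if j = x then (1:ℝ) else 0) := by
  have : 1 - γt ≠ 0 := sub_ne_zero.mpr (Ne.symm ht)
  simp only [marginal_apply]
  field_simp
  ring

theorem marginal_eq_stay_add_prior_add_flip (ht : γt ≠ 1) (lam : ℝ) (j : ι) :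
    marginal q x γs j = (1 - lam) * ((1 - γs) / (1 - γt)) * marginal q x γt j
      + (lam * (1 - γs) * q j
        + ((1 - lam) * (1 - (1 - γs) / (1 - γt)) + lam * γs) * (if j = x then (1:ℝ) else 0)) := by
  linear_combination
    (1 - lam) * marginal_eq_conditional_mix (γs := γs) x ht j + lam * marginal_apply q x γs j

end Marginal

theorem forward_transition_mixture_general
    (K : ℕ) (q1 : Fin K → ℝ)
    (hq1nn : ∀ j, 0 ≤ q1 j)
    (x : Fin K)
    (γs γt : ℝ) (hγs0 : 0 ≤ γs) (hγs1 : γs ≤ 1)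
    (hγt0 : 0 ≤ γt) (hts : γt ≤ γs) (hγtlt : γt < 1)
    (γst : ℝ) (hγst : γst = (1 - γs) / (1 - γt))
    (m : ℝ → Fin K → ℝ)
    (hm : ∀ (γ : ℝ) (j : Fin K), m γ j = (1 - γ) * q1 j + γ * (if j = x then (1:ℝ) else 0))
    (lam : ℝ) (hlam0 : 0 ≤ lam) (hlam1 : lam ≤ 1)
    (wstay wprior wflip : ℝ)
    (hws : wstay = (1 - lam) * γst)
    (hwp : wprior = lam * (1 - γs))
    (hwf : wflip = (1 - lam) * (1 - γst) + lam * γs)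
    (D : Fin K → ℝ)
    (hD : ∀ i, D i = wprior * q1 i + wflip * (if i = x then (1:ℝ) else 0))
    (F : Fin K → Fin K → ℝ)
    (hF : ∀ i j, F i j = (wstay * (if i = j then (1:ℝ) else 0) + D i) * m γt j / m γs i) :
    ∀ i : Fin K, 0 < wstay * m γt i + D i →
      0 ≤ D i / (wstay * m γt i + D i) ∧
      D i / (wstay * m γt i + D i) ≤ 1 ∧
      ∀ j : Fin K,
        F i j = (D i / (wstay * m γt i + D i)) * m γt j
          + (1 - D i / (wstay * m γt i + D i)) * (if j = i then (1:ℝ) else 0) := by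
  intro i hpos
  obtain rfl : m = marginal q1 x := funext fun γ => funext (hm γ)
  obtain ⟨hγst0, hγst1⟩ : γst ∈ Icc 0 1 := hγst ▸ one_sub_div_one_sub_mem_Icc hts hγs1 hγtlt
  have hstay : 0 ≤ wstay * marginal q1 x γt i := by
    rw [hws]
    exact mul_nonneg (mul_nonneg (sub_nonneg.mpr hlam1) hγst0)
      (marginal_nonneg x hq1nn hγt0 hγtlt.le i)
  have hD_nonneg : 0 ≤ D i := by
    have := hq1nn i
    have : 0 ≤ 1 - lam := sub_nonneg.mpr hlam1
    have : 0 ≤ 1 - γs := sub_nonneg.mpr hγs1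
    have : 0 ≤ 1 - γst := sub_nonneg.mpr hγst1
    rw [hD, hwp, hwf]
    positivity
  have hS : marginal q1 x γs i = wstay * marginal q1 x γt i + D i := by
    rw [hws, hD, hwp, hwf, hγst]
    exact marginal_eq_stay_add_prior_add_flip x hγtlt.ne lam i
  refine ⟨div_nonneg hD_nonneg hpos.le,
    div_le_one_of_le₀ (le_add_of_nonneg_left hstay) hpos.le, fun j => ?_⟩
  rw [hF, hS]
  exact stay_or_resample_eq_mixture _ _ _ hpos.ne' j

/-- Mixture form of the forward transition: resample from the marginal with
probability α_i, otherwise retain the previous state. -/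
theorem forward_transition_mixture
    (K : ℕ) (hK : 1 ≤ K) (q1 : Fin K → ℝ)
    (hq1nn : ∀ j, 0 ≤ q1 j) (hq1sum : ∑ j, q1 j = 1)
    (x : Fin K)
    (γs γt : ℝ) (hγs0 : 0 ≤ γs) (hγs1 : γs ≤ 1)
    (hγt0 : 0 ≤ γt) (hγt1 : γt ≤ 1) (hts : γt ≤ γs) (hγtlt : γt < 1)
    (γst : ℝ) (hγst : γst = (1 - γs) / (1 - γt))
    (m : ℝ → Fin K → ℝ)
    (hm : ∀ (γ : ℝ) (j : Fin K), m γ j = (1 - γ) * q1 j + γ * (if j = x then (1:ℝ) else 0))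
    (lam : ℝ) (hlam0 : 0 ≤ lam) (hlam1 : lam ≤ 1)
    (wstay wprior wflip : ℝ)
    (hws : wstay = (1 - lam) * γst)
    (hwp : wprior = lam * (1 - γs))
    (hwf : wflip = (1 - lam) * (1 - γst) + lam * γs)
    (D : Fin K → ℝ)
    (hD : ∀ i, D i = wprior * q1 i + wflip * (if i = x then (1:ℝ) else 0))
    (F : Fin K → Fin K → ℝ)
    (hF : ∀ i j, F i j = (wstay * (if i = j then (1:ℝ) else 0) + D i) * m γt j / m γs i) :
    ∀ i : Fin K, 0 < wstay * m γt i + D i →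
      0 ≤ D i / (wstay * m γt i + D i) ∧
      D i / (wstay * m γt i + D i) ≤ 1 ∧
      ∀ j : Fin K,
        F i j = (D i / (wstay * m γt i + D i)) * m γt j
          + (1 - D i / (wstay * m γt i + D i)) * (if j = i then (1:ℝ) else 0) :=
  forward_transition_mixture_general K q1 hq1nn x γs γt hγs0 hγs1 hγt0 hts hγtlt γst hγst m hm lam
    hlam0 hlam1 wstay wprior wflip hws hwp hwf D hD F hF
end

section
/- Transition (state-change) probability when the current state differs from the goal state: for every i ∈ Fin K with i ≠ x, the probability of leaving state i under the reverse kernel satisfies 1 - P_λ(i | i) = (1-γ_{s|t}) + λ·(1-γ_s)·(1/(1-γ_t) - q₁(i)); moreover the coefficient of λ, namely (1-γ_s)·(1/(1-γ_t) - q₁(i)), is nonnegative. -/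
/-- State-change probability when the current state differs from the goal
state, and nonnegativity of its slope in λ. -/
theorem leave_probability_off_goal
    (K : ℕ) (hK : 1 ≤ K) (q1 : Fin K → ℝ)
    (hq1nn : ∀ j, 0 ≤ q1 j) (hq1sum : ∑ j, q1 j = 1)
    (x : Fin K)
    (γs γt : ℝ) (hγs0 : 0 ≤ γs) (hγs1 : γs ≤ 1)
    (hγt0 : 0 ≤ γt) (hγt1 : γt ≤ 1) (hts : γt ≤ γs) (hγtlt : γt < 1)
    (γst : ℝ) (hγst : γst = (1 - γs) / (1 - γt))
    (lam : ℝ) (hlam0 : 0 ≤ lam) (hlam1 : lam ≤ 1)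
    (wstay wprior wflip : ℝ)
    (hws : wstay = (1 - lam) * γst)
    (hwp : wprior = lam * (1 - γs))
    (hwf : wflip = (1 - lam) * (1 - γst) + lam * γs)
    (P : Fin K → Fin K → ℝ)
    (hP : ∀ j i, P j i = wstay * (if j = i then (1:ℝ) else 0) + wprior * q1 j
      + wflip * (if j = x then (1:ℝ) else 0)) :
    ∀ i : Fin K, i ≠ x →
      1 - P i i = (1 - γst) + lam * ((1 - γs) * (1 / (1 - γt) - q1 i)) ∧
      0 ≤ (1 - γs) * (1 / (1 - γt) - q1 i) := by
  intro i hix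
  have ht : (0:ℝ) < 1 - γt := by linarith
  have hq1le : q1 i ≤ 1 := by
    rw [← hq1sum]
    exact Finset.single_le_sum (fun j _ => hq1nn j) (Finset.mem_univ i)
  constructor
  · rw [hP, if_pos rfl, if_neg hix, hws, hwp, hγst]
    field_simp
    ring
  · apply mul_nonneg (by linarith)
    have h1 : (1:ℝ) ≤ 1 / (1 - γt) := by
      rw [le_div_iff₀ ht]; linarith
    linarith
end

section
/- Linearity of the expected number of state transitions in λ: the total expected transition probability across all steps, E(λ) = ∑_{k=1}^{T} ∑_{i ∈ Fin K} m_{γ(k)}(i)·(1 - P^{(k)}_λ(i | i)), is an affine function of λ with nonnegative slope; that is, there exist real constants A ≥ 0 and B ≥ 0, not depending on λ, such that E(λ) = A·λ + B for all λ ∈ [0,1]. -/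
/-- Linearity of the expected number of state transitions in λ: the total
expected transition probability is affine in λ with nonnegative slope and
nonnegative intercept. -/
theorem expected_transitions_affine
    (K : ℕ) (hK : 1 ≤ K) (q1 : Fin K → ℝ)
    (hq1nn : ∀ j, 0 ≤ q1 j) (hq1sum : ∑ j, q1 j = 1)
    (x : Fin K)
    (m : ℝ → Fin K → ℝ)
    (hm : ∀ (γ : ℝ) (j : Fin K), m γ j = (1 - γ) * q1 j + γ * (if j = x then (1:ℝ) else 0))
    (T : ℕ) (hT : 1 ≤ T)
    (γ : ℕ → ℝ)
    (hγ0 : ∀ k, k ≤ T → 0 ≤ γ k) (hγ1 : ∀ k, k ≤ T → γ k ≤ 1)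
    (hdec : ∀ k, 1 ≤ k → k ≤ T → γ k ≤ γ (k - 1))
    (hlt1 : ∀ k, 1 ≤ k → k ≤ T → γ k < 1)
    (P : ℝ → ℕ → Fin K → Fin K → ℝ)
    (hP : ∀ (lam : ℝ) (k : ℕ) (j i : Fin K), P lam k j i
      = ((1 - lam) * ((1 - γ (k - 1)) / (1 - γ k))) * (if j = i then (1:ℝ) else 0)
      + (lam * (1 - γ (k - 1))) * q1 j
      + ((1 - lam) * (1 - (1 - γ (k - 1)) / (1 - γ k)) + lam * γ (k - 1))
          * (if j = x then (1:ℝ) else 0)) :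
    ∃ A B : ℝ, 0 ≤ A ∧ 0 ≤ B ∧
      ∀ lam : ℝ, 0 ≤ lam → lam ≤ 1 →
        ∑ k ∈ Finset.Icc 1 T, ∑ i, m (γ k) i * (1 - P lam k i i) = A * lam + B := by
  classical
  have hq1le : ∀ j, q1 j ≤ 1 := by
    intro j
    calc q1 j ≤ ∑ i, q1 i :=
          Finset.single_le_sum (fun i _ => hq1nn i) (Finset.mem_univ j)
      _ = 1 := hq1sum
  have hex : (∑ i : Fin K, (if i = x then (1:ℝ) else 0)) = 1 := by simp
  -- generic facts per step k
  refine ⟨(∑ k ∈ Finset.Icc 1 T, ∑ i, m (γ k) i * (1 - P 1 k i i))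
        - (∑ k ∈ Finset.Icc 1 T, ∑ i, m (γ k) i * (1 - P 0 k i i)),
        ∑ k ∈ Finset.Icc 1 T, ∑ i, m (γ k) i * (1 - P 0 k i i), ?_, ?_, ?_⟩
  · -- slope nonneg
    rw [← Finset.sum_sub_distrib]
    refine Finset.sum_nonneg fun k hk => ?_
    obtain ⟨hk1, hkT⟩ := Finset.mem_Icc.mp hk
    have hkT' : k - 1 ≤ T := le_trans (Nat.sub_le k 1) hkT
    have hg0 : 0 ≤ γ k := hγ0 k hkT
    have hg1 : γ k < 1 := hlt1 k hk1 hkT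
    have hgg : γ k ≤ γ (k - 1) := hdec k hk1 hkT
    have hg'1 : γ (k - 1) ≤ 1 := hγ1 (k - 1) hkT'
    have hg'0 : 0 ≤ γ (k - 1) := le_trans hg0 hgg
    have hpos : (0:ℝ) < 1 - γ k := by linarith
    have hrge : 1 - γ (k - 1) ≤ (1 - γ (k - 1)) / (1 - γ k) := by
      rw [le_div_iff₀ hpos]; nlinarith
    have hr1 : (1 - γ (k - 1)) / (1 - γ k) ≤ 1 := by
      rw [div_le_one hpos]; linarith
    have hmnn : ∀ i, 0 ≤ m (γ k) i := by
      intro i; rw [hm]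
      have h1 : (0:ℝ) ≤ (if i = x then (1:ℝ) else 0) := by split <;> norm_num
      have := hq1nn i
      nlinarith
    have hmsum : ∑ i, m (γ k) i = 1 := by
      simp only [hm]
      rw [Finset.sum_add_distrib, ← Finset.mul_sum, ← Finset.mul_sum, hq1sum, hex]; ring
    have hmx1 : m (γ k) x ≤ 1 := by
      calc m (γ k) x ≤ ∑ i, m (γ k) i :=
            Finset.single_le_sum (fun i _ => hmnn i) (Finset.mem_univ x)
        _ = 1 := hmsum
    have hM0 : 0 ≤ ∑ i, m (γ k) i * q1 i :=
      Finset.sum_nonneg fun i _ => mul_nonneg (hmnn i) (hq1nn i)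
    have hM1 : ∑ i, m (γ k) i * q1 i ≤ 1 := by
      calc ∑ i, m (γ k) i * q1 i ≤ ∑ i, m (γ k) i :=
            Finset.sum_le_sum fun i _ => by nlinarith [hmnn i, hq1le i, hq1nn i]
        _ = 1 := hmsum
    rw [← Finset.sum_sub_distrib]
    have hcong : ∀ i : Fin K, m (γ k) i * (1 - P 1 k i i) - m (γ k) i * (1 - P 0 k i i)
        = ((1 - γ (k - 1)) / (1 - γ k)) * m (γ k) i
          - (1 - γ (k - 1)) * (m (γ k) i * q1 i)
          + (1 - (1 - γ (k - 1)) / (1 - γ k) - γ (k - 1)) * (if i = x then m (γ k) i else 0) := by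
      intro i
      rw [hP, hP]
      rcases eq_or_ne i x with hi | hi
      · subst hi; simp; ring
      · simp [hi]; ring
    rw [Finset.sum_congr rfl fun i _ => hcong i]
    rw [Finset.sum_add_distrib, Finset.sum_sub_distrib, ← Finset.mul_sum, ← Finset.mul_sum,
      ← Finset.mul_sum, Finset.sum_ite_eq' Finset.univ x (m (γ k))]
    simp only [Finset.mem_univ, if_true, hmsum, mul_one]
    have key1 : 0 ≤ (1 - γ (k - 1)) * (1 - ∑ i, m (γ k) i * q1 i) :=
      mul_nonneg (by linarith) (by linarith)
    have key2 : 0 ≤ ((1 - γ (k - 1)) / (1 - γ k) - (1 - γ (k - 1))) * (1 - m (γ k) x) :=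
      mul_nonneg (by linarith) (by linarith)
    nlinarith [key1, key2]
  · -- intercept nonneg
    refine Finset.sum_nonneg fun k hk => Finset.sum_nonneg fun i _ => ?_
    obtain ⟨hk1, hkT⟩ := Finset.mem_Icc.mp hk
    have hkT' : k - 1 ≤ T := le_trans (Nat.sub_le k 1) hkT
    have hg0 : 0 ≤ γ k := hγ0 k hkT
    have hg1 : γ k < 1 := hlt1 k hk1 hkT
    have hgg : γ k ≤ γ (k - 1) := hdec k hk1 hkT
    have hg'1 : γ (k - 1) ≤ 1 := hγ1 (k - 1) hkT'
    have hg'0 : 0 ≤ γ (k - 1) := le_trans hg0 hgg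
    have hpos : (0:ℝ) < 1 - γ k := by linarith
    have hr0 : 0 ≤ (1 - γ (k - 1)) / (1 - γ k) := div_nonneg (by linarith) hpos.le
    have hr1 : (1 - γ (k - 1)) / (1 - γ k) ≤ 1 := by rw [div_le_one hpos]; linarith
    have hmnn : 0 ≤ m (γ k) i := by
      rw [hm]
      have h1 : (0:ℝ) ≤ (if i = x then (1:ℝ) else 0) := by split <;> norm_num
      have := hq1nn i
      nlinarith
    apply mul_nonneg hmnn
    rw [hP]
    rcases eq_or_ne i x with hi | hi
    · subst hi; simp
    · simp [hi]; linarith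
  · -- affine identity
    intro lam _ _
    have hpt : ∀ (k : ℕ) (i : Fin K), m (γ k) i * (1 - P lam k i i)
        = (m (γ k) i * (1 - P 1 k i i) - m (γ k) i * (1 - P 0 k i i)) * lam
          + m (γ k) i * (1 - P 0 k i i) := by
      intro k i
      rw [hP, hP, hP]; ring
    calc ∑ k ∈ Finset.Icc 1 T, ∑ i, m (γ k) i * (1 - P lam k i i)
        = ∑ k ∈ Finset.Icc 1 T, ∑ i,
            ((m (γ k) i * (1 - P 1 k i i) - m (γ k) i * (1 - P 0 k i i)) * lam
              + m (γ k) i * (1 - P 0 k i i)) :=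
          Finset.sum_congr rfl fun k _ => Finset.sum_congr rfl fun i _ => hpt k i
      _ = ((∑ k ∈ Finset.Icc 1 T, ∑ i, m (γ k) i * (1 - P 1 k i i))
            - (∑ k ∈ Finset.Icc 1 T, ∑ i, m (γ k) i * (1 - P 0 k i i))) * lam
          + ∑ k ∈ Finset.Icc 1 T, ∑ i, m (γ k) i * (1 - P 0 k i i) := by
          simp only [Finset.sum_add_distrib, Finset.sum_sub_distrib, ← Finset.sum_mul]
end
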